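/- The function p satisfies: (i) p(w',w) = conjugate of p(w,w') for all w, w' ∈ Y; (ii) for every w ∈ Y the fiber F(w) = {w'' ∈ Y : ψ(w'') = ψ(w)} is finite; (iii) for all w, w' ∈ Y, the finite sum ∑_{w'' ∈ F(w)} p(w,w'')·p(w'',w') equals p(w,w') (i.e., p is idempotent for the convolution product); and (iv) for every x ∈ X there exist w, w' ∈ Y with ψ(w) = ψ(w') = x and p(w,w') ≠ 0. -/

import Mathlib

noncomputable section

/-- The 2-sphere, realized as the unit sphere `{(c,z) : |c|² + z² = 1}` in `ℂ × ℝ`,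
with the subspace topology. -/
def TwoSphere : Set (ℂ × ℝ) := {p | ‖p.1‖ ^ 2 + p.2 ^ 2 = 1}

/-- The relation `r₀` on `S²`: `r₀ (c,z) (c',z')` iff `z ≠ 0`, `c' = -c` and `z' = z`. -/
def sphRel (a b : TwoSphere) : Prop :=
  a.1.2 ≠ 0 ∧ b.1.1 = -a.1.1 ∧ b.1.2 = a.1.2

/-- The twisted sphere `X`: the quotient of `S²` by the equivalence relation generated
by `r₀`, with the quotient topology. -/
abbrev TwistedSphere : Type := Quot (Relation.EqvGen sphRel)

/-- The quotient map `q : S² → X`. -/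
abbrev sphQ : TwoSphere → TwistedSphere := Quot.mk (Relation.EqvGen sphRel)

/-- `V = S² ∖ E`: the points of the sphere whose `ℝ`-coordinate is nonzero
(the sphere minus the equator). -/
def sphV : Set TwoSphere := {p | p.1.2 ≠ 0}

/-- The (discontinuous) "angle halving" map `α : V → S²`,
`α(c,z) = (√|c| · c^{1/2}, z)` where `c^{1/2}` is the principal complex square root.
It fixes the two poles, where `c = 0`. -/
def sphAlpha (v : sphV) : TwoSphere :=
  ⟨((Real.sqrt ‖v.1.1.1‖ : ℂ) * v.1.1.1 ^ (1/2 : ℂ), v.1.1.2), by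
    obtain ⟨⟨⟨c, z⟩, hmem⟩, -⟩ := v
    simp only [TwoSphere, Set.mem_setOf_eq] at hmem ⊢
    have h1 : ‖((Real.sqrt ‖c‖ : ℂ) * c ^ (1/2 : ℂ))‖
        = ‖c‖ := by
      rw [norm_mul, Complex.norm_real, Real.norm_of_nonneg (Real.sqrt_nonneg _)]
      have h2 : (1/2 : ℂ) = ((1/2 : ℝ) : ℂ) := by norm_num
      rw [h2, Complex.norm_cpow_real, ← Real.sqrt_eq_rpow,
        Real.mul_self_sqrt (norm_nonneg _)]
    rw [h1, hmem]⟩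

/-- `U = S² ∖ {poles}`: the points of the sphere whose `ℂ`-coordinate is nonzero. -/
def sphU : Set TwoSphere := {p | p.1.1 ≠ 0}

/-- `Y = U ⊔ V ⊔ V`, the disjoint union of `U` and two copies of `V`, with the
disjoint-union topology. -/
abbrev sphY : Type := sphU ⊕ (sphV ⊕ sphV)

/-- The map `ψ : Y → X`, equal to `q` on the `U` summand and to `q ∘ α` on each of the
two copies of `V`. -/
def sphPsi : sphY → TwistedSphere :=
  Sum.elim (fun u => sphQ u.1)
    (Sum.elim (fun v => sphQ (sphAlpha v)) (fun v => sphQ (sphAlpha v)))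

/-- The quantity `√(½ |z| (1 - |z|))`. -/
def halfSq (z : ℝ) : ℝ := Real.sqrt (1/2 * |z| * (1 - |z|))

open Classical in
/-- The function `p : Y × Y → ℂ` of STATEMENT 13: it vanishes on pairs with
`ψ(w) ≠ ψ(w')`, and on pairs with `ψ(w) = ψ(w')` it is given by the case analysis of
the context, where `z` denotes the `ℝ`-coordinate and `c` the `ℂ`-coordinate of the
underlying point of `S²`. -/
noncomputable def sphP : sphY → sphY → ℂ := fun w w' =>
  if sphPsi w = sphPsi w' then
    match w, w' with
    | Sum.inl u, Sum.inl u' => if u = u' then ((1 - |u.1.1.2| : ℝ) : ℂ) else 0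
    | Sum.inl u, Sum.inr (Sum.inl _) => ((halfSq u.1.1.2 : ℝ) : ℂ)
    | Sum.inr (Sum.inl _), Sum.inl u => ((halfSq u.1.1.2 : ℝ) : ℂ)
    | Sum.inl u, Sum.inr (Sum.inr _) =>
        (starRingEnd ℂ u.1.1.1 / (‖u.1.1.1‖ : ℂ)) * ((halfSq u.1.1.2 : ℝ) : ℂ)
    | Sum.inr (Sum.inr _), Sum.inl u =>
        (u.1.1.1 / (‖u.1.1.1‖ : ℂ)) * ((halfSq u.1.1.2 : ℝ) : ℂ)
    | Sum.inr (Sum.inl v), Sum.inr (Sum.inl v') =>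
        if v = v' then ((|v.1.1.2| : ℝ) : ℂ) else 0
    | Sum.inr (Sum.inr v), Sum.inr (Sum.inr v') =>
        if v = v' then ((|v.1.1.2| : ℝ) : ℂ) else 0
    | Sum.inr (Sum.inl _), Sum.inr (Sum.inr _) => 0
    | Sum.inr (Sum.inr _), Sum.inr (Sum.inl _) => 0
  else 0

/-!
On each fiber of `ψ`, `p` is the Gram matrix `p(w,w') = ∑ₖ φ(w)ₖ · conj φ(w')ₖ` of vectors
`φ(w) ∈ ℂ²` (`sphFrame`), hence Hermitian. Since `α` halves angles, `α(v) = ±α(v')` forces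
`v = v'`, so the fiber over a point `(c,z)` off the equator is `{u, -u, v⁽¹⁾, v⁽²⁾}`, or
`{v⁽¹⁾, v⁽²⁾}` at a pole; there the vectors `φ(w)` form a Parseval frame of `ℂ²`: for the matrix
`Φ` with rows `φ(w)`, `Φ*Φ = 1`, so `(ΦΦ*)² = Φ(Φ*Φ)Φ* = ΦΦ*`. Over the equator the fiber is a
single `u`, with `p(u,u) = 1`.
-/

open ComplexConjugate

section GramKernel

variable {Y ι R : Type*} [Fintype ι] [CommSemiring R] [StarRing R]

def gramKernel (φ : Y → ι → R) (w w' : Y) : R := ∑ k, φ w k * star (φ w' k)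

def IsParsevalFrame [DecidableEq ι] (φ : Y → ι → R) (F : Finset Y) : Prop :=
  ∀ k l, ∑ w ∈ F, φ w k * star (φ w l) = if k = l then 1 else 0

lemma star_gramKernel (φ : Y → ι → R) (w w' : Y) :
    star (gramKernel φ w w') = gramKernel φ w' w := by
  simp [gramKernel, star_sum, mul_comm]

lemma IsParsevalFrame.sum_gramKernel_mul_gramKernel [DecidableEq ι] {φ : Y → ι → R}
    {F : Finset Y} (hF : IsParsevalFrame φ F) (w w' : Y) :
    ∑ w'' ∈ F, gramKernel φ w w'' * gramKernel φ w'' w' = gramKernel φ w w' := by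
  have hfactor : ∀ k l, ∑ w'' ∈ F, φ w k * star (φ w'' k) * (φ w'' l * star (φ w' l))
      = φ w k * star (φ w' l) * ∑ w'' ∈ F, φ w'' l * star (φ w'' k) := fun k l => by
    rw [Finset.mul_sum]; exact Finset.sum_congr rfl fun _ _ => by ring
  simp only [gramKernel, Finset.sum_mul_sum]
  rw [Finset.sum_comm]
  refine (Finset.sum_congr rfl fun k _ => Finset.sum_comm).trans ?_
  simp only [hfactor, hF _ _, mul_ite, mul_one, mul_zero, Finset.sum_ite_eq', Finset.mem_univ,
    if_true]

end GramKernel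

lemma norm_smul_self_injective {E : Type*} [NormedAddCommGroup E] [NormedSpace ℝ E] :
    Function.Injective fun x : E => ‖x‖ • x := by
  intro x y h
  have hn : ‖x‖ = ‖y‖ := by
    have h' := congrArg norm h
    simp only [norm_smul, norm_norm] at h'
    exact (mul_self_inj (norm_nonneg x) (norm_nonneg y)).mp h'
  rcases eq_or_ne ‖x‖ 0 with h0 | h0
  · rw [norm_eq_zero.mp h0, norm_eq_zero.mp (hn.symm.trans h0)]
  · simp only [hn] at h
    exact smul_right_injective E (hn ▸ h0) h

lemma ofReal_sqrt_mul_ofReal_sqrt {x : ℝ} (hx : 0 ≤ x) : (√x : ℂ) * (√x : ℂ) = x := by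
  rw [← Complex.ofReal_mul, Real.mul_self_sqrt hx]

lemma conj_div_norm_mul_div_norm {c : ℂ} (hc : c ≠ 0) : conj c / ‖c‖ * (c / ‖c‖) = 1 := by
  have : (‖c‖ : ℂ) ≠ 0 := by simpa using hc
  rw [div_mul_div_comm, mul_comm, Complex.mul_conj, Complex.normSq_eq_norm_sq]
  field_simp
  push_cast; ring

namespace TwistedSphere

lemma norm_sq_add_sq (a : TwoSphere) : ‖a.1.1‖ ^ 2 + a.1.2 ^ 2 = 1 := a.2

lemma abs_z_le_one (a : TwoSphere) : |a.1.2| ≤ 1 := by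
  nlinarith [norm_sq_add_sq a, sq_abs a.1.2, abs_nonneg a.1.2, sq_nonneg ‖a.1.1‖]

lemma c_ne_zero_of_z_eq_zero {a : TwoSphere} (hz : a.1.2 = 0) : a.1.1 ≠ 0 := by
  intro hc
  simpa [hz, hc] using norm_sq_add_sq a

lemma abs_z_eq_one_of_c_eq_zero {a : TwoSphere} (hc : a.1.1 = 0) : |a.1.2| = 1 := by
  have h : a.1.2 ^ 2 = 1 := by simpa [hc] using norm_sq_add_sq a
  nlinarith [sq_abs a.1.2, abs_nonneg a.1.2]

def negC (a : TwoSphere) : TwoSphere :=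
  ⟨(-a.1.1, a.1.2), by simpa [TwoSphere] using a.2⟩

@[simp] lemma negC_c (a : TwoSphere) : (negC a).1.1 = -a.1.1 := rfl

@[simp] lemma negC_z (a : TwoSphere) : (negC a).1.2 = a.1.2 := rfl

@[simp] lemma negC_negC (a : TwoSphere) : negC (negC a) = a := by
  ext <;> simp

lemma negC_mem_sphU {a : TwoSphere} (hc : a.1.1 ≠ 0) : negC a ∈ sphU :=
  neg_ne_zero.mpr hc

def SameClass (a b : TwoSphere) : Prop := b = a ∨ (a.1.2 ≠ 0 ∧ b = negC a)

lemma sameClass_equivalence : Equivalence SameClass where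
  refl _ := Or.inl rfl
  symm := by
    rintro a b (rfl | ⟨hz, rfl⟩)
    · exact Or.inl rfl
    · exact Or.inr ⟨hz, (negC_negC a).symm⟩
  trans := by
    rintro a b c (rfl | ⟨hz, rfl⟩) (rfl | ⟨hz', rfl⟩)
    · exact Or.inl rfl
    · exact Or.inr ⟨hz', rfl⟩
    · exact Or.inr ⟨hz, rfl⟩
    · exact Or.inl (negC_negC a)

lemma sphQ_eq_sphQ_iff {a b : TwoSphere} : sphQ a = sphQ b ↔ SameClass a b := by
  rw [Quot.eq, (Relation.EqvGen.is_equivalence _).eqvGen_iff]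
  constructor
  · intro h
    refine sameClass_equivalence.eqvGen_iff.mp (Relation.EqvGen.mono ?_ _ _ h)
    rintro a b ⟨hz, hc, hz'⟩
    exact Or.inr ⟨hz, Subtype.ext (Prod.ext hc hz')⟩
  · rintro (rfl | ⟨hz, rfl⟩)
    · exact Relation.EqvGen.refl _
    · exact Relation.EqvGen.rel _ _ ⟨hz, rfl, rfl⟩

lemma SameClass.z_eq {a b : TwoSphere} (h : SameClass a b) : b.1.2 = a.1.2 := by
  rcases h with rfl | ⟨-, rfl⟩ <;> rfl

lemma SameClass.norm_c_eq {a b : TwoSphere} (h : SameClass a b) : ‖b.1.1‖ = ‖a.1.1‖ := by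
  rcases h with rfl | ⟨-, rfl⟩ <;> simp

lemma sphAlpha_c_sq (v : sphV) : (sphAlpha v).1.1 ^ 2 = ‖v.1.1.1‖ * v.1.1.1 := by
  change ((√‖v.1.1.1‖ : ℂ) * v.1.1.1 ^ (1 / 2 : ℂ)) ^ 2 = _
  rw [mul_pow, ← Complex.ofReal_pow, Real.sq_sqrt (norm_nonneg _), one_div,
    ← Nat.cast_ofNat, Complex.cpow_nat_inv_pow _ two_ne_zero]

lemma sphV_eq_of_sphQ_sphAlpha_eq {v v' : sphV}
    (h : sphQ (sphAlpha v) = sphQ (sphAlpha v')) : v = v' := by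
  have hclass := sphQ_eq_sphQ_iff.mp h
  have hsq : (sphAlpha v).1.1 ^ 2 = (sphAlpha v').1.1 ^ 2 := by
    rcases hclass with h | ⟨-, h⟩ <;> simp [h]
  rw [sphAlpha_c_sq, sphAlpha_c_sq] at hsq
  have hc : v.1.1.1 = v'.1.1.1 := norm_smul_self_injective (by simpa [Complex.real_smul] using hsq)
  exact Subtype.ext (Subtype.ext (Prod.ext hc hclass.z_eq.symm))

lemma exists_sphQ_sphAlpha_eq {a : TwoSphere} (hz : a.1.2 ≠ 0) :
    ∃ v : sphV, sphQ (sphAlpha v) = sphQ a := by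
  have hnorm : ‖a.1.1 ^ 2 / (‖a.1.1‖ : ℂ)‖ = ‖a.1.1‖ := by
    simp [sq, mul_self_div_self]
  let v : sphV := ⟨⟨(a.1.1 ^ 2 / ‖a.1.1‖, a.1.2), by
    change ‖_‖ ^ 2 + _ = 1; rw [hnorm]; exact a.2⟩, hz⟩
  have hsq : (sphAlpha v).1.1 ^ 2 = a.1.1 ^ 2 := by
    rw [sphAlpha_c_sq]
    change (‖a.1.1 ^ 2 / (‖a.1.1‖ : ℂ)‖ : ℂ) * (a.1.1 ^ 2 / ‖a.1.1‖) = _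
    rw [hnorm]
    rcases eq_or_ne a.1.1 0 with hc | hc
    · simp [hc]
    · have : (‖a.1.1‖ : ℂ) ≠ 0 := by simpa using hc
      field_simp
  refine ⟨v, sphQ_eq_sphQ_iff.mpr ?_⟩
  rcases sq_eq_sq_iff_eq_or_eq_neg.mp hsq with h | h
  · exact Or.inl (Subtype.ext (Prod.ext h.symm rfl))
  · exact Or.inr ⟨hz, Subtype.ext (Prod.ext (by simp [h]) rfl)⟩

lemma sphPsi_inl_eq_iff {u : sphU} {a : TwoSphere} :
    sphPsi (.inl u) = sphQ a ↔ SameClass a u.1 :=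
  eq_comm.trans sphQ_eq_sphQ_iff

lemma z_ne_zero_of_sphQ_sphAlpha_eq {v : sphV} {a : TwoSphere}
    (h : sphQ (sphAlpha v) = sphQ a) : a.1.2 ≠ 0 :=
  (sphQ_eq_sphQ_iff.mp h).z_eq ▸ v.2

lemma sphQ_sphAlpha_eq_iff {v v₀ : sphV} {a : TwoSphere} (hv₀ : sphQ (sphAlpha v₀) = sphQ a) :
    sphQ (sphAlpha v) = sphQ a ↔ v = v₀ :=
  ⟨fun h => sphV_eq_of_sphQ_sphAlpha_eq (h.trans hv₀.symm), fun h => h ▸ hv₀⟩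

lemma fiber_of_z_eq_zero {a : TwoSphere} (hz : a.1.2 = 0) :
    {w | sphPsi w = sphQ a} = {.inl ⟨a, c_ne_zero_of_z_eq_zero hz⟩} := by
  ext (u | v | v) <;> simp only [Set.mem_ofPred_eq, Set.mem_singleton_iff, reduceCtorEq,
    iff_false, Sum.inl.injEq]
  · simp [sphPsi_inl_eq_iff, SameClass, hz, Subtype.ext_iff]
  · exact fun h => z_ne_zero_of_sphQ_sphAlpha_eq h hz
  · exact fun h => z_ne_zero_of_sphQ_sphAlpha_eq h hz

lemma fiber_of_c_eq_zero {a : TwoSphere} (hc : a.1.1 = 0) {v₀ : sphV}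
    (hv₀ : sphQ (sphAlpha v₀) = sphQ a) :
    {w | sphPsi w = sphQ a} = ↑({.inr (.inl v₀), .inr (.inr v₀)} : Finset sphY) := by
  ext (u | v | v) <;> simp only [Set.mem_ofPred_eq, Finset.coe_insert, Finset.coe_singleton,
    Set.mem_insert_iff, Set.mem_singleton_iff, reduceCtorEq, or_false, false_or,
    Sum.inr.injEq, Sum.inl.injEq]
  · refine iff_of_false (fun h => u.2 ?_) id
    simpa [hc] using (sphPsi_inl_eq_iff.mp h).norm_c_eq
  · exact sphQ_sphAlpha_eq_iff hv₀
  · exact sphQ_sphAlpha_eq_iff hv₀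

lemma fiber_of_c_ne_zero {a : TwoSphere} (hc : a.1.1 ≠ 0) (hz : a.1.2 ≠ 0) {v₀ : sphV}
    (hv₀ : sphQ (sphAlpha v₀) = sphQ a) :
    {w | sphPsi w = sphQ a} = ↑({.inl ⟨a, hc⟩, .inl ⟨negC a, negC_mem_sphU hc⟩,
      .inr (.inl v₀), .inr (.inr v₀)} : Finset sphY) := by
  ext (u | v | v) <;> simp only [Set.mem_ofPred_eq, Finset.coe_insert, Finset.coe_singleton,
    Set.mem_insert_iff, Set.mem_singleton_iff, reduceCtorEq, or_false, false_or,
    Sum.inr.injEq, Sum.inl.injEq]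
  · simp [sphPsi_inl_eq_iff, SameClass, hz, Subtype.ext_iff]
  · exact sphQ_sphAlpha_eq_iff hv₀
  · exact sphQ_sphAlpha_eq_iff hv₀

def sphFrame : sphY → Fin 2 → ℂ
  | .inl u => ![√((1 - |u.1.1.2|) / 2),
      conj u.1.1.1 / ‖u.1.1.1‖ * √((1 - |u.1.1.2|) / 2)]
  | .inr (.inl v) => ![√|v.1.1.2|, 0]
  | .inr (.inr v) => ![0, √|v.1.1.2|]

lemma halfSq_eq_sqrt_mul_sqrt (z : ℝ) : halfSq z = √((1 - |z|) / 2) * √|z| := by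
  rw [halfSq, ← Real.sqrt_mul' _ (abs_nonneg z)]
  ring_nf

lemma sphP_of_sphPsi_ne {w w' : sphY} (h : sphPsi w ≠ sphPsi w') : sphP w w' = 0 := by
  rw [sphP.eq_def, if_neg h]

lemma sphP_eq_gramKernel {w w' : sphY} (h : sphPsi w = sphPsi w') :
    sphP w w' = gramKernel sphFrame w w' := by
  rcases w with u | v | v <;> rcases w' with u' | v' | v' <;>
    simp only [sphP, if_pos h, gramKernel, sphFrame, Fin.sum_univ_two, Matrix.cons_val_zero,
      Matrix.cons_val_one, map_zero, zero_mul, mul_zero, add_zero, zero_add, Complex.star_def,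
      map_mul, map_div₀, Complex.conj_ofReal, Complex.conj_conj, halfSq_eq_sqrt_mul_sqrt,
      Complex.ofReal_mul]
  case inl.inl =>
    have hA := ofReal_sqrt_mul_ofReal_sqrt (x := (1 - |u.1.1.2|) / 2)
      (by linarith [abs_z_le_one u.1])
    have hE := conj_div_norm_mul_div_norm u.2
    rcases sphQ_eq_sphQ_iff.mp h with hu' | ⟨-, hu'⟩
    · rw [if_pos (Subtype.ext hu').symm, hu']
      push_cast at hA ⊢
      linear_combination (-(1 + conj u.1.1.1 / ‖u.1.1.1‖ * (u.1.1.1 / ‖u.1.1.1‖))) * hA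
        - (1 - |u.1.1.2| : ℂ) / 2 * hE
    · have hne : u ≠ u' := fun he =>
        u.2 (CharZero.eq_neg_self_iff.mp (by simpa [← he] using congrArg (·.1.1) hu'))
      rw [if_neg hne, hu']
      simp only [negC_c, negC_z, norm_neg, neg_div]
      linear_combination (√((1 - |u.1.1.2|) / 2) : ℂ) ^ 2 * hE
  case inl.inr.inl => rw [show v'.1.1.2 = u.1.1.2 from (sphQ_eq_sphQ_iff.mp h).z_eq]
  case inl.inr.inr =>
    rw [show v'.1.1.2 = u.1.1.2 from (sphQ_eq_sphQ_iff.mp h).z_eq]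
    ring
  case inr.inl.inl =>
    rw [show v.1.1.2 = u'.1.1.2 from (sphQ_eq_sphQ_iff.mp h).z_eq.symm]
    ring
  case inr.inr.inl =>
    rw [show v.1.1.2 = u'.1.1.2 from (sphQ_eq_sphQ_iff.mp h).z_eq.symm]
    ring
  case inr.inl.inr.inl =>
    obtain rfl := sphV_eq_of_sphQ_sphAlpha_eq h
    rw [if_pos rfl, ofReal_sqrt_mul_ofReal_sqrt (abs_nonneg _)]
  case inr.inr.inr.inr =>
    obtain rfl := sphV_eq_of_sphQ_sphAlpha_eq h
    rw [if_pos rfl, ofReal_sqrt_mul_ofReal_sqrt (abs_nonneg _)]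

lemma isParsevalFrame_of_c_eq_zero {a : TwoSphere} (hc : a.1.1 = 0) {v₀ : sphV}
    (hv₀ : sphQ (sphAlpha v₀) = sphQ a) :
    IsParsevalFrame sphFrame {.inr (.inl v₀), .inr (.inr v₀)} := by
  have ht : |v₀.1.1.2| = 1 := (sphQ_eq_sphQ_iff.mp hv₀).z_eq ▸ abs_z_eq_one_of_c_eq_zero hc
  intro k l
  rw [Finset.sum_pair (by simp)]
  fin_cases k <;> fin_cases l <;> simp [sphFrame, ht]

lemma isParsevalFrame_of_c_ne_zero {a : TwoSphere} (hc : a.1.1 ≠ 0) {v₀ : sphV}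
    (hv₀ : sphQ (sphAlpha v₀) = sphQ a) :
    IsParsevalFrame sphFrame {.inl ⟨a, hc⟩, .inl ⟨negC a, negC_mem_sphU hc⟩,
      .inr (.inl v₀), .inr (.inr v₀)} := by
  have ht : v₀.1.1.2 = a.1.2 := (sphQ_eq_sphQ_iff.mp hv₀).z_eq.symm
  have hA := ofReal_sqrt_mul_ofReal_sqrt (x := (1 - |a.1.2|) / 2) (by linarith [abs_z_le_one a])
  have hB := ofReal_sqrt_mul_ofReal_sqrt (abs_nonneg a.1.2)
  have hE := conj_div_norm_mul_div_norm hc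
  push_cast at hA
  have hne : (⟨a, hc⟩ : sphU) ≠ ⟨negC a, negC_mem_sphU hc⟩ := fun h =>
    hc (CharZero.eq_neg_self_iff.mp (congrArg (·.1.1.1) h))
  intro k l
  rw [Finset.sum_insert (by simp [hne]), Finset.sum_insert (by simp), Finset.sum_pair (by simp)]
  fin_cases k <;> fin_cases l <;>
    simp only [sphFrame, Fin.isValue, Matrix.cons_val_zero, Matrix.cons_val_one,
      Matrix.cons_val_fin_one, Fin.mk_one, Fin.zero_eta, star_mul', star_div₀, RCLike.star_def,
      Complex.conj_ofReal, Complex.conj_conj, negC_z, negC_c, map_neg, norm_neg, star_neg, ht,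
      star_zero, mul_zero, add_zero, zero_ne_one, one_ne_zero, if_true, if_false]
  · linear_combination 2 * hA + hB
  · ring
  · ring
  · linear_combination 2 * (conj a.1.1 / ‖a.1.1‖ * (a.1.1 / ‖a.1.1‖)) * hA + hB
      + (1 - |a.1.2| : ℂ) * hE

lemma exists_isParsevalFrame_fiber {a : TwoSphere} (hz : a.1.2 ≠ 0) :
    ∃ F : Finset sphY, {w | sphPsi w = sphQ a} = ↑F ∧ IsParsevalFrame sphFrame F := by
  obtain ⟨v₀, hv₀⟩ := exists_sphQ_sphAlpha_eq hz
  by_cases hc : a.1.1 = 0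
  · exact ⟨_, fiber_of_c_eq_zero hc hv₀, isParsevalFrame_of_c_eq_zero hc hv₀⟩
  · exact ⟨_, fiber_of_c_ne_zero hc hz hv₀, isParsevalFrame_of_c_ne_zero hc hv₀⟩

lemma finite_fiber (a : TwoSphere) : {w | sphPsi w = sphQ a}.Finite := by
  by_cases hz : a.1.2 = 0
  · rw [fiber_of_z_eq_zero hz]
    exact Set.finite_singleton _
  · obtain ⟨F, hF, -⟩ := exists_isParsevalFrame_fiber hz
    rw [hF]
    exact F.finite_toSet

lemma finsum_fiber_sphP_mul_sphP_of_mem {a : TwoSphere} {w w' : sphY} (hw : sphPsi w = sphQ a)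
    (hw' : sphPsi w' = sphQ a) :
    ∑ᶠ w'' ∈ {w'' | sphPsi w'' = sphQ a}, sphP w w'' * sphP w'' w' = sphP w w' := by
  by_cases hz : a.1.2 = 0
  · have hF := fiber_of_z_eq_zero hz
    obtain rfl : w = _ := hF.subset hw
    obtain rfl : w' = _ := hF.subset hw'
    rw [hF, finsum_mem_singleton]
    simp [sphP, hz]
  · obtain ⟨F, hF, hpars⟩ := exists_isParsevalFrame_fiber hz
    have hmem : ∀ w'' ∈ F, sphPsi w'' = sphQ a := fun w'' h => (Set.ext_iff.mp hF w'').mpr h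
    rw [hF, finsum_mem_coe_finset, sphP_eq_gramKernel (hw.trans hw'.symm),
      ← hpars.sum_gramKernel_mul_gramKernel]
    refine Finset.sum_congr rfl fun w'' h => ?_
    rw [sphP_eq_gramKernel (hw.trans (hmem w'' h).symm),
      sphP_eq_gramKernel ((hmem w'' h).trans hw'.symm)]

lemma sphP_swap (w w' : sphY) : sphP w' w = conj (sphP w w') := by
  by_cases h : sphPsi w = sphPsi w'
  · rw [sphP_eq_gramKernel h, sphP_eq_gramKernel h.symm, starRingEnd_apply, star_gramKernel]
  · rw [sphP_of_sphPsi_ne h, sphP_of_sphPsi_ne (Ne.symm h), map_zero]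

lemma finsum_fiber_sphP_mul_sphP (w w' : sphY) :
    ∑ᶠ w'' ∈ {w'' | sphPsi w'' = sphPsi w}, sphP w w'' * sphP w'' w' = sphP w w' := by
  obtain ⟨a, ha⟩ := Quot.exists_rep (sphPsi w)
  rw [← ha]
  by_cases h : sphPsi w' = sphQ a
  · exact finsum_fiber_sphP_mul_sphP_of_mem ha.symm h
  · rw [sphP_of_sphPsi_ne (ha ▸ Ne.symm h)]
    refine finsum_mem_eq_zero_of_forall_eq_zero fun w'' hw'' => ?_
    rw [sphP_of_sphPsi_ne (hw''.trans_ne (Ne.symm h)), mul_zero]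

lemma exists_sphP_ne_zero (a : TwoSphere) :
    ∃ w w' : sphY, sphPsi w = sphQ a ∧ sphPsi w' = sphQ a ∧ sphP w w' ≠ 0 := by
  by_cases hz : a.1.2 = 0
  · let u : sphU := ⟨a, c_ne_zero_of_z_eq_zero hz⟩
    refine ⟨.inl u, .inl u, rfl, rfl, ?_⟩
    simp [u, sphP, hz]
  · obtain ⟨v₀, hv₀⟩ := exists_sphQ_sphAlpha_eq hz
    refine ⟨.inr (.inl v₀), .inr (.inl v₀), hv₀, hv₀, ?_⟩
    rw [sphP, if_pos rfl, if_pos rfl]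
    exact_mod_cast abs_ne_zero.mpr v₀.2

end TwistedSphere

/-- the function `p` satisfies: (i) `p(w',w) = conj (p(w,w'))`;
(ii) every fiber `F(w) = {w'' : ψ(w'') = ψ(w)}` is finite; (iii) `p` is idempotent for
the convolution product, i.e. `∑_{w'' ∈ F(w)} p(w,w'') p(w'',w') = p(w,w')`; and
(iv) for every `x ∈ X` there are `w, w'` with `ψ(w) = ψ(w') = x` and `p(w,w') ≠ 0`. -/
theorem stmt_13 :
    (∀ w w' : sphY, sphP w' w = starRingEnd ℂ (sphP w w')) ∧
    (∀ w : sphY, {w'' : sphY | sphPsi w'' = sphPsi w}.Finite) ∧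
    (∀ w w' : sphY,
      ∑ᶠ w'' ∈ {w'' : sphY | sphPsi w'' = sphPsi w}, sphP w w'' * sphP w'' w'
        = sphP w w') ∧
    (∀ x : TwistedSphere, ∃ w w' : sphY,
      sphPsi w = x ∧ sphPsi w' = x ∧ sphP w w' ≠ 0) := by
  refine ⟨TwistedSphere.sphP_swap, fun w => ?_, TwistedSphere.finsum_fiber_sphP_mul_sphP,
    fun x => ?_⟩
  · obtain ⟨a, ha⟩ := Quot.exists_rep (sphPsi w)
    exact ha ▸ TwistedSphere.finite_fiber a
  · induction x using Quot.ind
    exact TwistedSphere.exists_sphP_ne_zero _
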